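/- arXiv:2506.05604 — 5 statements merged into one kernel-verified Lean document; each statement's English description precedes it below -/
import Mathlib

section
/- Let G be a directed graph with weights ℓ(e) ≤ u(e) on each arc, s,t vertices, and P an s-t path. Suppose there exists a valid explanation for P, i.e., weights x with ℓ(e) ≤ x(e) ≤ u(e) for all e such that P is a shortest s-t path under x. Then the weights y defined by y(e) = ℓ(e) for e ∈ P and y(e) = u(e) for e ∉ P also form a valid explanation for P (P is shortest under y). -/
/-- A directed path from `s` to `t`: a nonempty list of arcs without repeats,
where consecutive arcs share endpoints, starting at `s` and ending at `t`. -/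
def IsPath {V E : Type*} (src dst : E → V) (s t : V) (p : List E) : Prop :=
  p ≠ [] ∧ p.Nodup ∧ p.Chain' (fun e f => dst e = src f) ∧
    p.head?.map src = some s ∧ p.getLast?.map dst = some t

/-- The total weight of a path. -/
def wsum {E : Type*} (w : E → ℝ) (p : List E) : ℝ := (p.map w).sum

theorem stmt1 {V E : Type*} [DecidableEq E] (src dst : E → V) (s t : V)
    (ℓ u : E → ℝ) (hlu : ∀ e, ℓ e ≤ u e)
    (P : List E) (hP : IsPath src dst s t P)
    (x : E → ℝ) (hx : ∀ e, ℓ e ≤ x e ∧ x e ≤ u e)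
    (hxsuff : ∀ Q, IsPath src dst s t Q → wsum x P ≤ wsum x Q) :
    ∀ Q, IsPath src dst s t Q →
      wsum (fun e => if e ∈ P then ℓ e else u e) P ≤
        wsum (fun e => if e ∈ P then ℓ e else u e) Q := by
  intro Q hQ
  set y : E → ℝ := fun e => if e ∈ P then ℓ e else u e with hy
  have hsum : ∀ (L : List E), L.Nodup →
      wsum y L - wsum x L = ∑ e ∈ L.toFinset, (y e - x e) := by
    intro L hL
    rw [Finset.sum_sub_distrib, List.sum_toFinset _ hL, List.sum_toFinset _ hL]
    rfl
  set S : Finset E := P.toFinset ∩ Q.toFinset with hS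
  have h1 : ∑ e ∈ P.toFinset, (y e - x e) ≤ ∑ e ∈ S, (y e - x e) := by
    have := Finset.sum_le_sum_of_subset_of_nonneg
      (f := fun e => x e - y e) (Finset.inter_subset_left (s₂ := Q.toFinset))
      (fun e he _ => by
        have heP : e ∈ P := List.mem_toFinset.mp he
        simp only [hy, if_pos heP, sub_nonneg]
        exact (hx e).1)
    simp only [Finset.sum_sub_distrib] at this ⊢
    linarith
  have h2 : ∑ e ∈ S, (y e - x e) ≤ ∑ e ∈ Q.toFinset, (y e - x e) := by
    apply Finset.sum_le_sum_of_subset_of_nonneg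
      (Finset.inter_subset_right (s₁ := P.toFinset))
    intro e heQ heS
    have heP : e ∉ P := by
      intro h
      exact heS (Finset.mem_inter.mpr ⟨List.mem_toFinset.mpr h, heQ⟩)
    simp only [hy, if_neg heP, sub_nonneg]
    exact (hx e).2
  have key : wsum y P - wsum x P ≤ wsum y Q - wsum x Q := by
    rw [hsum P hP.2.1, hsum Q hQ.2.1]
    exact h1.trans h2
  have := hxsuff Q hQ
  linarith
end

section
/- In the PBE algorithm, if an iteration does not change the weight function w (i.e., w(e) = u(e) already for all e ∈ Q \ P where Q is the current shortest path), and the all-upper-off-path weights y (y(e) = ℓ(e) on P, y(e) = u(e) off P) form a valid explanation for P, then w(Q) ≥ w(P), so the algorithm's while loop terminates. -/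
theorem stmt5 {V E : Type*} [DecidableEq E] (src dst : E → V) (s t : V)
    (ℓ u : E → ℝ) (hlu : ∀ e, ℓ e ≤ u e)
    (P : List E) (hP : IsPath src dst s t P)
    (w : E → ℝ) (hwP : ∀ e ∈ P, w e = ℓ e) (hwlu : ∀ e, w e = ℓ e ∨ w e = u e)
    (Q : List E) (hQ : IsPath src dst s t Q)
    (hQshort : ∀ K, IsPath src dst s t K → wsum w Q ≤ wsum w K)
    (hQu : ∀ e ∈ Q, e ∉ P → w e = u e)
    -- the all-upper-off-path weights `y` form a valid explanation for `P`:
    (hy : ∀ K, IsPath src dst s t K →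
      wsum (fun e => if e ∈ P then ℓ e else u e) P ≤
        wsum (fun e => if e ∈ P then ℓ e else u e) K) :
    wsum w P ≤ wsum w Q := by
  have h1 : wsum w P = wsum (fun e => if e ∈ P then ℓ e else u e) P := by
    unfold wsum
    congr 1
    exact List.map_congr_left fun e he => by simp [he, hwP e he]
  have h2 : wsum (fun e => if e ∈ P then ℓ e else u e) Q = wsum w Q := by
    unfold wsum
    congr 1
    refine List.map_congr_left fun e he => ?_
    by_cases h : e ∈ P
    · simp [h, hwP e h]
    · simp [h, hQu e he h]
  rw [h1, ← h2]
  exact hy Q hQ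
end

section
/- Single-closure theorem: Let G be a directed graph with weights ℓ, let P₀ be a shortest s-t path under ℓ, let e₁ ∈ P₀, and let P₁ be a shortest s-t path in G - e₁ under ℓ. Set u(e₁) = ∞ (or any value ≥ ℓ(P₁)), and u(e) ≥ ℓ(e) arbitrary for other arcs. Let τ satisfy τ(e) > 0 for all e ∉ P₀ and τ(e) ≥ τ(e₁) for all e ∈ P₀. Then any τ-simple valid explanation w for P₁ (minimizer of Σ_e τ(e)(w(e) − ℓ(e)) over valid explanations) satisfies w(f) = ℓ(f) for every arc f ∉ P₀; i.e., the support of w is contained in P₀. -/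
/-- The τ-valuation of a weight function `w` relative to lower bounds `ℓ`. -/
def Vtau {E : Type*} [Fintype E] (τ ℓ w : E → ℝ) : ℝ := ∑ e, τ e * (w e - ℓ e)

lemma wsum_if {E : Type*} [DecidableEq E] (ℓ : E → ℝ) (e₁ : E) (δ : ℝ)
    (Q : List E) (hQ : Q.Nodup) :
    wsum (fun e => if e = e₁ then ℓ e₁ + δ else ℓ e) Q
      = wsum ℓ Q + (if e₁ ∈ Q then δ else 0) := by
  induction Q with
  | nil => simp [wsum]
  | cons a Q ih =>
    obtain ⟨ha', hnd⟩ := List.nodup_cons.mp hQ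
    have ih' := ih hnd
    simp only [wsum, List.map_cons, List.sum_cons, List.mem_cons] at ih' ⊢
    by_cases hae : e₁ = a
    · subst hae
      rw [if_pos rfl, if_pos (Or.inl rfl), if_neg ha'] at *
      simp at ih'
      linarith
    · rw [if_neg (fun h => hae h.symm)]
      by_cases hm : e₁ ∈ Q
      · rw [if_pos hm] at ih'
        rw [if_pos (Or.inr hm)]
        linarith
      · rw [if_neg hm] at ih'
        rw [if_neg (by rintro (h | h); exact hae h; exact hm h)]
        linarith

lemma wsum_mono {E : Type*} (v w : E → ℝ) (h : ∀ e, v e ≤ w e) (Q : List E) :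
    wsum v Q ≤ wsum w Q := by
  unfold wsum
  apply List.sum_le_sum
  intro e _
  exact h e

theorem stmt6 {V E : Type*} [Fintype E] (src dst : E → V) (s t : V)
    (ℓ u τ : E → ℝ) (hlu : ∀ e, ℓ e ≤ u e)
    (P₀ : List E) (hP₀ : IsPath src dst s t P₀)
    (hP₀short : ∀ Q, IsPath src dst s t Q → wsum ℓ P₀ ≤ wsum ℓ Q)
    (e₁ : E) (he₁ : e₁ ∈ P₀)
    (P₁ : List E) (hP₁ : IsPath src dst s t P₁) (he₁P₁ : e₁ ∉ P₁)
    (hP₁short : ∀ Q, IsPath src dst s t Q → e₁ ∉ Q → wsum ℓ P₁ ≤ wsum ℓ Q)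
    (hu₁ : ℓ e₁ + (wsum ℓ P₁ - wsum ℓ P₀) ≤ u e₁)
    (hτ0 : ∀ e, 0 ≤ τ e)
    (hτpos : ∀ e, e ∉ P₀ → 0 < τ e)
    (hτmin : ∀ e ∈ P₀, τ e₁ ≤ τ e)
    (w : E → ℝ)
    (hwvalid : ∀ e, ℓ e ≤ w e ∧ w e ≤ u e)
    (hwsuff : ∀ Q, IsPath src dst s t Q → wsum w P₁ ≤ wsum w Q)
    (hwsimple : ∀ w' : E → ℝ, (∀ e, ℓ e ≤ w' e ∧ w' e ≤ u e) →
      (∀ Q, IsPath src dst s t Q → wsum w' P₁ ≤ wsum w' Q) →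
      Vtau τ ℓ w ≤ Vtau τ ℓ w') :
    ∀ f, f ∉ P₀ → w f = ℓ f := by
  classical
  set δ : ℝ := wsum ℓ P₁ - wsum ℓ P₀ with hδdef
  have hδ0 : 0 ≤ δ := by
    have := hP₀short P₁ hP₁
    simp [hδdef]; linarith
  set w' : E → ℝ := fun e => if e = e₁ then ℓ e₁ + δ else ℓ e with hw'def
  have hw'valid : ∀ e, ℓ e ≤ w' e ∧ w' e ≤ u e := by
    intro e
    by_cases he : e = e₁
    · subst he; constructor <;> simp [hw'def] <;> linarith
    · simp [hw'def, he, hlu e]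
  have hw'suff : ∀ Q, IsPath src dst s t Q → wsum w' P₁ ≤ wsum w' Q := by
    intro Q hQ
    have hQnd : Q.Nodup := hQ.2.1
    have h1 : wsum w' P₁ = wsum ℓ P₁ := by
      rw [hw'def, wsum_if ℓ e₁ δ P₁ hP₁.2.1, if_neg he₁P₁]; ring
    rw [h1, hw'def, wsum_if ℓ e₁ δ Q hQnd]
    by_cases hm : e₁ ∈ Q
    · rw [if_pos hm]
      have := hP₀short Q hQ
      simp only [hδdef]; linarith
    · rw [if_neg hm]
      have := hP₁short Q hQ hm
      linarith
  have hVw' : Vtau τ ℓ w' = τ e₁ * δ := by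
    unfold Vtau
    rw [Finset.sum_eq_single e₁]
    · simp [hw'def]
    · intro b _ hb; simp [hw'def, hb]
    · intro h; exact absurd (Finset.mem_univ e₁) h
  have hVle : Vtau τ ℓ w ≤ τ e₁ * δ := hVw' ▸ hwsimple w' hw'valid hw'suff
  -- sums over P₀ and complement
  set S : Finset E := P₀.toFinset with hSdef
  have hsplit : Vtau τ ℓ w = (∑ e ∈ S, τ e * (w e - ℓ e)) + ∑ e ∈ Sᶜ, τ e * (w e - ℓ e) := by
    unfold Vtau
    rw [← Finset.sum_add_sum_compl S]
  have hwl : ∀ e, 0 ≤ w e - ℓ e := fun e => by linarith [(hwvalid e).1]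
  have hsumS : δ ≤ ∑ e ∈ S, (w e - ℓ e) := by
    have h1 : wsum w P₁ ≤ wsum w P₀ := hwsuff P₀ hP₀
    have h2 : wsum ℓ P₁ ≤ wsum w P₁ := wsum_mono ℓ w (fun e => (hwvalid e).1) P₁
    have h3 : ∑ e ∈ S, (w e - ℓ e) = wsum w P₀ - wsum ℓ P₀ := by
      have hnd : P₀.Nodup := hP₀.2.1
      rw [Finset.sum_sub_distrib, hSdef, List.sum_toFinset _ hnd, List.sum_toFinset _ hnd]
      simp [wsum]
    rw [h3, hδdef]; linarith
  have hlower : τ e₁ * δ ≤ ∑ e ∈ S, τ e * (w e - ℓ e) := by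
    calc τ e₁ * δ ≤ τ e₁ * ∑ e ∈ S, (w e - ℓ e) :=
          mul_le_mul_of_nonneg_left hsumS (hτ0 e₁)
      _ = ∑ e ∈ S, τ e₁ * (w e - ℓ e) := by rw [Finset.mul_sum]
      _ ≤ ∑ e ∈ S, τ e * (w e - ℓ e) := by
          apply Finset.sum_le_sum
          intro e he
          exact mul_le_mul_of_nonneg_right (hτmin e (List.mem_toFinset.mp he)) (hwl e)
  have hcompl : ∑ e ∈ Sᶜ, τ e * (w e - ℓ e) ≤ 0 := by linarith [hsplit ▸ hVle]
  have hzero : ∀ e ∈ Sᶜ, τ e * (w e - ℓ e) = 0 := by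
    intro e he
    have hnn : ∀ e ∈ Sᶜ, 0 ≤ τ e * (w e - ℓ e) :=
      fun e _ => mul_nonneg (hτ0 e) (hwl e)
    have := Finset.sum_le_sum hnn  -- not needed
    have heq : ∑ e ∈ Sᶜ, τ e * (w e - ℓ e) = 0 :=
      le_antisymm hcompl (Finset.sum_nonneg hnn)
    exact (Finset.sum_eq_zero_iff_of_nonneg hnn).mp heq e he
  intro f hf
  have hfS : f ∈ Sᶜ := by
    simp [hSdef, Finset.mem_compl, List.mem_toFinset, hf]
  have := hzero f hfS
  have hτf := hτpos f hf
  have : w f - ℓ f = 0 := by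
    rcases mul_eq_zero.mp this with h | h
    · exact absurd h (ne_of_gt hτf)
    · exact h
  linarith
end

section
/- In the single-closure setting, the weight function z defined by z(e₁) = ℓ(e₁) + ℓ(P₁) − ℓ(P₀) and z(e) = ℓ(e) for e ≠ e₁ is a valid explanation for P₁: under z, every s-t path K satisfies z(K) ≥ z(P₁) = ℓ(P₁). -/
lemma wsum_congr {E : Type*} (w w' : E → ℝ) (p : List E)
    (h : ∀ e ∈ p, w e = w' e) : wsum w p = wsum w' p := by
  unfold wsum
  rw [List.map_congr_left h]

lemma wsum_notmem {E : Type*} [DecidableEq E] (ℓ : E → ℝ) (e₁ : E) (c : ℝ)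
    (p : List E) (h : e₁ ∉ p) :
    wsum (fun e => if e = e₁ then c else ℓ e) p = wsum ℓ p := by
  apply wsum_congr
  intro e he
  have : e ≠ e₁ := fun h' => h (h' ▸ he)
  simp [this]

lemma wsum_mem {E : Type*} [DecidableEq E] (ℓ : E → ℝ) (e₁ : E) (c : ℝ)
    (p : List E) (hnd : p.Nodup) (h : e₁ ∈ p) :
    wsum (fun e => if e = e₁ then c else ℓ e) p = wsum ℓ p + (c - ℓ e₁) := by
  induction p with
  | nil => simp at h
  | cons a q ih =>
    rcases List.mem_cons.1 h with rfl | hq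
    · have hnq : e₁ ∉ q := (List.nodup_cons.1 hnd).1
      simp only [wsum, List.map_cons, List.sum_cons, if_pos rfl, if_true]
      have := wsum_notmem ℓ e₁ c q hnq
      simp only [wsum] at this
      rw [this]; ring
    · have hne : a ≠ e₁ := fun h' => (List.nodup_cons.1 hnd).1 (h' ▸ hq)
      simp only [wsum, List.map_cons, List.sum_cons, if_neg hne]
      have := ih (List.nodup_cons.1 hnd).2 hq
      simp only [wsum] at this
      rw [this]; ring

theorem stmt7 {V E : Type*} [DecidableEq E] (src dst : E → V) (s t : V)
    (ℓ u τ : E → ℝ) (hlu : ∀ e, ℓ e ≤ u e)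
    (P₀ : List E) (hP₀ : IsPath src dst s t P₀)
    (hP₀short : ∀ Q, IsPath src dst s t Q → wsum ℓ P₀ ≤ wsum ℓ Q)
    (e₁ : E) (he₁ : e₁ ∈ P₀)
    (P₁ : List E) (hP₁ : IsPath src dst s t P₁) (he₁P₁ : e₁ ∉ P₁)
    (hP₁short : ∀ Q, IsPath src dst s t Q → e₁ ∉ Q → wsum ℓ P₁ ≤ wsum ℓ Q)
    (hu₁ : ℓ e₁ + (wsum ℓ P₁ - wsum ℓ P₀) ≤ u e₁)
 :
    (∀ e, ℓ e ≤ (fun e => if e = e₁ then ℓ e₁ + (wsum ℓ P₁ - wsum ℓ P₀) else ℓ e) e ∧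
      (fun e => if e = e₁ then ℓ e₁ + (wsum ℓ P₁ - wsum ℓ P₀) else ℓ e) e ≤ u e) ∧
    wsum (fun e => if e = e₁ then ℓ e₁ + (wsum ℓ P₁ - wsum ℓ P₀) else ℓ e) P₁ = wsum ℓ P₁ ∧
    ∀ K, IsPath src dst s t K →
      wsum (fun e => if e = e₁ then ℓ e₁ + (wsum ℓ P₁ - wsum ℓ P₀) else ℓ e) P₁ ≤
        wsum (fun e => if e = e₁ then ℓ e₁ + (wsum ℓ P₁ - wsum ℓ P₀) else ℓ e) K := by
  
  set c := ℓ e₁ + (wsum ℓ P₁ - wsum ℓ P₀) with hc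
  have hP1z : wsum (fun e => if e = e₁ then c else ℓ e) P₁ = wsum ℓ P₁ :=
    wsum_notmem ℓ e₁ c P₁ he₁P₁
  have hP0P1 : wsum ℓ P₀ ≤ wsum ℓ P₁ := hP₀short P₁ hP₁
  refine ⟨?_, hP1z, ?_⟩
  · intro e
    by_cases h : e = e₁
    · subst h
      refine ⟨?_, ?_⟩ <;> simp only [if_pos rfl, if_true]
      · simp only [hc]; linarith
      · exact hu₁
    · simp [h, hlu e]
  · intro K hK
    rw [hP1z]
    by_cases hmem : e₁ ∈ K
    · rw [wsum_mem ℓ e₁ c K hK.2.1 hmem]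
      have := hP₀short K hK
      have : wsum ℓ P₀ ≤ wsum ℓ K := this
      simp only [hc]
      linarith
    · rw [wsum_notmem ℓ e₁ c K hmem]
      exact hP₁short K hK hmem
end

section
/- If w is a valid explanation for path P and w' is defined by w'(e) = ℓ(e) for e ∈ P and w'(e) = w(e) for e ∉ P, then w' is also a valid explanation for P, and V_τ(w') ≤ V_τ(w). Hence some τ-simple valid explanation has support disjoint from P. -/
theorem stmt17 {V E : Type*} [Fintype E] [DecidableEq E] (src dst : E → V) (s t : V)
    (ℓ u τ : E → ℝ) (hlu : ∀ e, ℓ e ≤ u e) (hτ0 : ∀ e, 0 ≤ τ e)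
    (P : List E) (hP : IsPath src dst s t P)
    (w : E → ℝ)
    (hwv : ∀ e, ℓ e ≤ w e ∧ w e ≤ u e)
    (hws : ∀ Q, IsPath src dst s t Q → wsum w P ≤ wsum w Q) :
    -- `w'` is also a valid explanation for `P` …
    (∀ e, ℓ e ≤ (fun e => if e ∈ P then ℓ e else w e) e ∧
      (fun e => if e ∈ P then ℓ e else w e) e ≤ u e) ∧
    (∀ Q, IsPath src dst s t Q →
      wsum (fun e => if e ∈ P then ℓ e else w e) P ≤
        wsum (fun e => if e ∈ P then ℓ e else w e) Q) ∧
    -- … with no larger valuation …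
    Vtau τ ℓ (fun e => if e ∈ P then ℓ e else w e) ≤ Vtau τ ℓ w ∧
    -- … hence if `w` is τ-simple then `w'` is a τ-simple valid explanation whose
    -- support is disjoint from `P`:
    ((∀ w' : E → ℝ, (∀ e, ℓ e ≤ w' e ∧ w' e ≤ u e) →
        (∀ Q, IsPath src dst s t Q → wsum w' P ≤ wsum w' Q) →
        Vtau τ ℓ w ≤ Vtau τ ℓ w') →
      (∀ w' : E → ℝ, (∀ e, ℓ e ≤ w' e ∧ w' e ≤ u e) →
        (∀ Q, IsPath src dst s t Q → wsum w' P ≤ wsum w' Q) →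
        Vtau τ ℓ (fun e => if e ∈ P then ℓ e else w e) ≤ Vtau τ ℓ w') ∧
      ∀ e ∈ P, (fun e => if e ∈ P then ℓ e else w e) e = ℓ e) := by
  set w' : E → ℝ := fun e => if e ∈ P then ℓ e else w e with hw'
  have hbounds : ∀ e, ℓ e ≤ w' e ∧ w' e ≤ u e := by
    intro e
    simp only [hw']
    by_cases h : e ∈ P <;> simp [h, hlu e, (hwv e).1, (hwv e).2]
  -- key rewriting lemma for nodup lists
  have hkey : ∀ l : List E, l.Nodup → wsum w' l = wsum w l -
      ∑ e ∈ l.toFinset.filter (· ∈ P), (w e - ℓ e) := by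
    intro l hl
    have h1 : wsum w' l = ∑ e ∈ l.toFinset, w' e :=
      (List.sum_toFinset _ hl).symm
    have h2 : wsum w l = ∑ e ∈ l.toFinset, w e :=
      (List.sum_toFinset _ hl).symm
    rw [h1, h2, Finset.sum_filter, ← Finset.sum_sub_distrib]
    congr 1
    ext e
    by_cases h : e ∈ P <;> simp [hw', h]
  have hnonneg : ∀ (S : Finset E), 0 ≤ ∑ e ∈ S, (w e - ℓ e) :=
    fun S => Finset.sum_nonneg fun e _ => sub_nonneg.2 (hwv e).1
  have hshort : ∀ Q, IsPath src dst s t Q → wsum w' P ≤ wsum w' Q := by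
    intro Q hQ
    rw [hkey P hP.2.1, hkey Q hQ.2.1]
    have hPfilter : P.toFinset.filter (· ∈ P) = P.toFinset := by
      ext e; simp
    rw [hPfilter]
    have hsub : Q.toFinset.filter (· ∈ P) ⊆ P.toFinset := by
      intro e he
      simp only [Finset.mem_filter] at he
      simpa using he.2
    have h3 : ∑ e ∈ Q.toFinset.filter (· ∈ P), (w e - ℓ e) ≤
        ∑ e ∈ P.toFinset, (w e - ℓ e) :=
      Finset.sum_le_sum_of_subset_of_nonneg hsub
        (fun e _ _ => sub_nonneg.2 (hwv e).1)
    have := hws Q hQ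
    linarith
  have hV : Vtau τ ℓ w' ≤ Vtau τ ℓ w := by
    apply Finset.sum_le_sum
    intro e _
    apply mul_le_mul_of_nonneg_left _ (hτ0 e)
    apply sub_le_sub_right
    simp only [hw']
    by_cases h : e ∈ P <;> simp [h, (hwv e).1]
  refine ⟨hbounds, hshort, hV, fun hmin => ⟨fun w'' hb hs => ?_, fun e he => by simp [hw', he]⟩⟩
  exact le_trans hV (hmin w'' hb hs)
end
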